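/- arXiv:2408.09272 — 2 statements merged into one kernel-verified Lean document; each statement's English description precedes it below -/
import Mathlib

section
/- For every finite region R of area A admitting n-ribbon tilings, the per-tile entropy satisfies Ent_n(R) = log₂(T_n(R))/(A/n) ≤ log₂ n + log₂ e, where T_n(R) is the number of n-ribbon tilings of R. -/
attribute [local instance] Classical.propDecidable

/-- The level of the unit square `[x,x+1] × [y,y+1]`, indexed by `(x,y)`. -/
def level (s : ℤ × ℤ) : ℤ := s.1 + s.2

/-- An `n`-ribbon: a connected sequence of `n` unit squares, each after the first
directly above or to the right of its predecessor. -/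
def IsRibbon (n : ℕ) (T : Finset (ℤ × ℤ)) : Prop :=
  ∃ f : ℕ → ℤ × ℤ,
    (∀ i, i + 1 < n → f (i + 1) = f i + (1, 0) ∨ f (i + 1) = f i + (0, 1)) ∧
    T = (Finset.range n).image f

/-- An `n`-ribbon tiling of a region `R`: a partition of the squares of `R` into `n`-ribbons. -/
def IsTiling (n : ℕ) (R : Finset (ℤ × ℤ)) (P : Finset (Finset (ℤ × ℤ))) : Prop :=
  (∀ T ∈ P, IsRibbon n T) ∧
  (P : Set (Finset (ℤ × ℤ))).PairwiseDisjoint id ∧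
  P.biUnion id = R

/-- The number of `n`-ribbon tilings of a region `R`. -/
noncomputable def TilingCount (n : ℕ) (R : Finset (ℤ × ℤ)) : ℕ :=
  Set.ncard {P | IsTiling n R P}

/-- `s` is the root square of the tile `T`: its square of smallest level. -/
def IsRoot (T : Finset (ℤ × ℤ)) (s : ℤ × ℤ) : Prop :=
  s ∈ T ∧ ∀ t ∈ T, level s ≤ level t

/-- The set of root squares of the tiles of a tiling `P`. -/
def rootSet (P : Finset (Finset (ℤ × ℤ))) : Set (ℤ × ℤ) :=
  {s | ∃ T ∈ P, IsRoot T s}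

/-- The number `τ_l` of tiles of `P` whose root square has level `l`. -/
noncomputable def tilesAtLevel (P : Finset (Finset (ℤ × ℤ))) (l : ℤ) : ℕ :=
  (P.filter (fun T => ∃ s, IsRoot T s ∧ level s = l)).card

/-- The left-of relation on unit squares. -/
def LeftOf (s t : ℤ × ℤ) : Prop :=
  (level s = level t ∧ s.1 < t.1) ∨ (|level s - level t| = 1 ∧ s.1 ≤ t.1 ∧ t.2 ≤ s.2)

/-- The maximal number of `n`-ribbon tilings over all regions of area `a * n`. -/
noncomputable def maxT (n a : ℕ) : ℕ :=
  sSup {t : ℕ | ∃ R : Finset (ℤ × ℤ), R.card = a * n ∧ TilingCount n R = t}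

namespace RibbonAux

open Finset

lemma square_ext {s t : ℤ × ℤ} (h1 : level s = level t) (h2 : s.1 = t.1) : s = t := by
  have : s.2 = t.2 := by
    have := h1; unfold level at this; omega
  exact Prod.ext h2 this

lemma level_step {x y : ℤ × ℤ} (h : y = x + (1, 0) ∨ y = x + (0, 1)) :
    level y = level x + 1 := by
  rcases h with h | h <;> subst h <;> simp [level, Prod.fst_add, Prod.snd_add] <;> ring

lemma step_fst {x y : ℤ × ℤ} (h : y = x + (1, 0) ∨ y = x + (0, 1)) :
    y.1 = x.1 + 1 ∨ y.1 = x.1 := by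
  rcases h with h | h <;> subst h <;> simp

/-- Master structural lemma for ribbons. -/
lemma ribbon_spec {n : ℕ} {T : Finset (ℤ × ℤ)} (hn : 0 < n) (hT : IsRibbon n T) :
    ∃ f : ℕ → ℤ × ℤ,
      T = (Finset.range n).image f ∧
      (∀ i, i + 1 < n → f (i + 1) = f i + (1, 0) ∨ f (i + 1) = f i + (0, 1)) ∧
      (∀ i, i < n → level (f i) = level (f 0) + i) ∧
      IsRoot T (f 0) := by
  obtain ⟨f, hf, rfl⟩ := hT
  have hlev : ∀ i, i < n → level (f i) = level (f 0) + i := by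
    intro i
    induction i with
    | zero => simp
    | succ i ih =>
      intro h
      have hi : i < n := by omega
      have := level_step (hf i h)
      rw [this, ih hi]
      push_cast; ring
  refine ⟨f, rfl, hf, hlev, ?_, ?_⟩
  · exact Finset.mem_image.2 ⟨0, Finset.mem_range.2 hn, rfl⟩
  · intro t ht
    obtain ⟨i, hi, rfl⟩ := Finset.mem_image.1 ht
    rw [hlev i (Finset.mem_range.1 hi)]
    omega

lemma ribbon_level_inj {n : ℕ} {T : Finset (ℤ × ℤ)} (hn : 0 < n) (hT : IsRibbon n T) :
    ∀ s ∈ T, ∀ t ∈ T, level s = level t → s = t := by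
  obtain ⟨f, rfl, hf, hlev, hroot⟩ := ribbon_spec hn hT
  intro s hs t ht h
  obtain ⟨i, hi, rfl⟩ := Finset.mem_image.1 hs
  obtain ⟨j, hj, rfl⟩ := Finset.mem_image.1 ht
  rw [Finset.mem_range] at hi hj
  rw [hlev i hi, hlev j hj] at h
  have : i = j := by omega
  rw [this]

lemma ribbon_card {n : ℕ} {T : Finset (ℤ × ℤ)} (hn : 0 < n) (hT : IsRibbon n T) :
    T.card = n := by
  obtain ⟨f, rfl, hf, hlev, hroot⟩ := ribbon_spec hn hT
  rw [Finset.card_image_of_injOn, Finset.card_range]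
  intro i hi j hj h
  rw [Finset.coe_range, Set.mem_Iio] at hi hj
  have := hlev i hi; have h2 := hlev j hj
  have : level (f 0) + (i:ℤ) = level (f 0) + (j:ℤ) := by rw [← this, ← h2, h]
  omega

lemma root_unique {T : Finset (ℤ × ℤ)} {n : ℕ} (hn : 0 < n) (hT : IsRibbon n T)
    {r r' : ℤ × ℤ} (h : IsRoot T r) (h' : IsRoot T r') : r = r' :=
  ribbon_level_inj hn hT r h.1 r' h'.1
    (le_antisymm (h.2 r' h'.1) (h'.2 r h.1))



/-- `x` and `y` are consecutive squares of a tile of `P`. -/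
def Linked (P : Finset (Finset (ℤ × ℤ))) (x y : ℤ × ℤ) : Prop :=
  ∃ T ∈ P, x ∈ T ∧ y ∈ T ∧ (y = x + (1, 0) ∨ y = x + (0, 1))

/-- `s` lies at distance `a` above the root of its tile of `P`. -/
def Age (P : Finset (Finset (ℤ × ℤ))) (s : ℤ × ℤ) (a : ℕ) : Prop :=
  ∃ T ∈ P, ∃ r, IsRoot T r ∧ s ∈ T ∧ level s = level r + a

variable {n : ℕ} {R : Finset (ℤ × ℤ)} {P : Finset (Finset (ℤ × ℤ))}

lemma tile_unique (hP : IsTiling n R P) {T T' : Finset (ℤ × ℤ)} {x : ℤ × ℤ}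
    (hT : T ∈ P) (hT' : T' ∈ P) (hx : x ∈ T) (hx' : x ∈ T') : T = T' := by
  by_contra h
  exact (Finset.disjoint_left.1 (hP.2.1 hT hT' h)) hx hx'

lemma mem_R (hP : IsTiling n R P) {T : Finset (ℤ × ℤ)} {x : ℤ × ℤ}
    (hT : T ∈ P) (hx : x ∈ T) : x ∈ R := by
  rw [← hP.2.2]
  exact Finset.mem_biUnion.2 ⟨T, hT, hx⟩

lemma linked_mem (hP : IsTiling n R P) {x y : ℤ × ℤ} (h : Linked P x y) :
    x ∈ R ∧ y ∈ R := by
  obtain ⟨T, hT, hx, hy, _⟩ := h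
  exact ⟨mem_R hP hT hx, mem_R hP hT hy⟩

lemma linked_level {x y : ℤ × ℤ} (h : Linked P x y) : level y = level x + 1 := by
  obtain ⟨T, _, _, _, hs⟩ := h
  exact level_step hs

lemma linked_pred_unique (hn : 0 < n) (hP : IsTiling n R P) {x x' y : ℤ × ℤ}
    (h : Linked P x y) (h' : Linked P x' y) : x = x' := by
  obtain ⟨T, hT, hx, hy, hs⟩ := h
  obtain ⟨T', hT', hx', hy', hs'⟩ := h'
  cases tile_unique hP hT hT' hy hy'
  exact ribbon_level_inj hn (hP.1 T hT) x hx x' hx'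
    (by rw [← add_left_inj 1, ← level_step hs, ← level_step hs'])

lemma linked_succ_unique (hn : 0 < n) (hP : IsTiling n R P) {x y y' : ℤ × ℤ}
    (h : Linked P x y) (h' : Linked P x y') : y = y' := by
  obtain ⟨T, hT, hx, hy, hs⟩ := h
  obtain ⟨T', hT', hx', hy', hs'⟩ := h'
  cases tile_unique hP hT hT' hx hx'
  exact ribbon_level_inj hn (hP.1 T hT) y hy y' hy'
    (by rw [level_step hs, level_step hs'])

lemma exists_pred (hn : 0 < n) (hP : IsTiling n R P) {y : ℤ × ℤ}
    (hy : y ∈ R) (hyr : y ∉ rootSet P) : ∃ x, Linked P x y := by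
  rw [← hP.2.2] at hy
  obtain ⟨T, hT, hyT⟩ := Finset.mem_biUnion.1 hy
  obtain ⟨f, hTf, hf, hlev, hroot⟩ := ribbon_spec hn (hP.1 T hT)
  have hy' := hyT
  rw [hTf] at hy'
  obtain ⟨i, hi, rfl⟩ := Finset.mem_image.1 hy'
  rw [Finset.mem_range] at hi
  rcases Nat.eq_zero_or_pos i with rfl | hi0
  · exact absurd ⟨T, hT, hroot⟩ hyr
  · obtain ⟨j, rfl⟩ := Nat.exists_eq_add_of_lt hi0
    rw [zero_add] at *
    refine ⟨f j, T, hT, ?_, hyT, hf j hi⟩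
    rw [hTf]
    exact Finset.mem_image.2 ⟨j, Finset.mem_range.2 (by omega), rfl⟩

lemma root_no_pred (hn : 0 < n) (hP : IsTiling n R P) {y : ℤ × ℤ}
    (hy : y ∈ rootSet P) : ¬ ∃ x, Linked P x y := by
  rintro ⟨x, T, hT, hx, hyT, hs⟩
  obtain ⟨T', hT', hroot⟩ := hy
  cases tile_unique hP hT' hT hroot.1 hyT
  have := hroot.2 x hx
  have := level_step hs
  omega

lemma age_mem (hP : IsTiling n R P) {s : ℤ × ℤ} {a : ℕ} (h : Age P s a) : s ∈ R := by
  obtain ⟨T, hT, r, _, hs, _⟩ := h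
  exact mem_R hP hT hs

lemma age_exists (hn : 0 < n) (hP : IsTiling n R P) {s : ℤ × ℤ} (hs : s ∈ R) :
    ∃ a, a < n ∧ Age P s a := by
  rw [← hP.2.2] at hs
  obtain ⟨T, hT, hsT⟩ := Finset.mem_biUnion.1 hs
  obtain ⟨f, hTf, hf, hlev, hroot⟩ := ribbon_spec hn (hP.1 T hT)
  have hs' := hsT
  rw [hTf] at hs'
  obtain ⟨i, hi, rfl⟩ := Finset.mem_image.1 hs'
  rw [Finset.mem_range] at hi
  exact ⟨i, hi, T, hT, f 0, hroot, hsT, hlev i hi⟩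

lemma age_unique (hn : 0 < n) (hP : IsTiling n R P) {s : ℤ × ℤ} {a b : ℕ}
    (ha : Age P s a) (hb : Age P s b) : a = b := by
  obtain ⟨T, hT, r, hr, hs, hla⟩ := ha
  obtain ⟨T', hT', r', hr', hs', hlb⟩ := hb
  cases tile_unique hP hT hT' hs hs'
  cases root_unique hn (hP.1 T hT) hr hr'
  omega

lemma age_lt (hn : 0 < n) (hP : IsTiling n R P) {s : ℤ × ℤ} {a : ℕ}
    (ha : Age P s a) : a < n := by
  obtain ⟨b, hb, hab⟩ := age_exists hn hP (age_mem hP ha)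
  cases age_unique hn hP ha hab
  exact hb

lemma age_zero (hn : 0 < n) (hP : IsTiling n R P) {s : ℤ × ℤ} (hs : s ∈ R) :
    Age P s 0 ↔ s ∈ rootSet P := by
  constructor
  · rintro ⟨T, hT, r, hr, hsT, hl⟩
    have : s = r := ribbon_level_inj hn (hP.1 T hT) s hsT r hr.1 (by omega)
    subst this
    exact ⟨T, hT, hr⟩
  · rintro ⟨T, hT, hr⟩
    exact ⟨T, hT, s, hr, hr.1, by simp⟩

lemma age_succ (hn : 0 < n) (hP : IsTiling n R P) {s : ℤ × ℤ} {a : ℕ} :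
    Age P s (a + 1) ↔ ∃ x, Linked P x s ∧ Age P x a := by
  constructor
  · rintro ⟨T, hT, r, hr, hsT, hl⟩
    obtain ⟨f, hTf, hf, hlev, hroot⟩ := ribbon_spec hn (hP.1 T hT)
    cases root_unique hn (hP.1 T hT) hr hroot
    have hs' := hsT
    rw [hTf] at hs'
    obtain ⟨i, hi, rfl⟩ := Finset.mem_image.1 hs'
    rw [Finset.mem_range] at hi
    have : i = a + 1 := by have := hlev i hi; omega
    subst this
    have hfa : f a ∈ T := by
      rw [hTf]; exact Finset.mem_image.2 ⟨a, Finset.mem_range.2 (by omega), rfl⟩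
    exact ⟨f a, ⟨T, hT, hfa, hsT, hf a hi⟩, T, hT, f 0, hroot, hfa, hlev a (by omega)⟩
  · rintro ⟨x, ⟨T, hT, hxT, hsT, hstep⟩, T', hT', r, hr, hxT', hl⟩
    cases tile_unique hP hT hT' hxT hxT'
    refine ⟨T, hT, r, hr, hsT, ?_⟩
    have := level_step hstep
    push_cast
    omega

lemma age_next (hn : 0 < n) (hP : IsTiling n R P) {x : ℤ × ℤ} {a : ℕ}
    (ha : Age P x a) (han : a + 1 < n) : ∃ y, Linked P x y := by
  obtain ⟨T, hT, r, hr, hxT, hl⟩ := ha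
  obtain ⟨f, hTf, hf, hlev, hroot⟩ := ribbon_spec hn (hP.1 T hT)
  cases root_unique hn (hP.1 T hT) hr hroot
  have hx' := hxT
  rw [hTf] at hx'
  obtain ⟨i, hi, rfl⟩ := Finset.mem_image.1 hx'
  rw [Finset.mem_range] at hi
  have hia : i = a := by have := hlev i hi; omega
  have han' : i + 1 < n := by omega
  refine ⟨f (i + 1), T, hT, hxT, ?_, hf i han'⟩
  rw [hTf]
  exact Finset.mem_image.2 ⟨i + 1, Finset.mem_range.2 han', rfl⟩

/-- Canonical predecessor of a square in a tiling. -/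
noncomputable def pred (P : Finset (Finset (ℤ × ℤ))) (y : ℤ × ℤ) : ℤ × ℤ :=
  if h : ∃ x, Linked P x y then h.choose else y

lemma pred_linked {y : ℤ × ℤ} (h : ∃ x, Linked P x y) : Linked P (pred P y) y := by
  rw [pred, dif_pos h]
  exact h.choose_spec

lemma pred_eq (hn : 0 < n) (hP : IsTiling n R P) {x y : ℤ × ℤ} (h : Linked P x y) :
    pred P y = x :=
  linked_pred_unique hn hP (pred_linked ⟨x, h⟩) h



/-- A strictly monotone bijection between two finite sets of integers is unique. -/
lemma mono_bij_unique {Y X : Finset ℤ} {f g : ℤ → ℤ}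
    (hf : Set.BijOn f ↑Y ↑X) (hg : Set.BijOn g ↑Y ↑X)
    (hfm : StrictMonoOn f ↑Y) (hgm : StrictMonoOn g ↑Y) :
    ∀ y ∈ Y, f y = g y := by
  have himg : Y.image f = X := by
    rw [← Finset.coe_inj, Finset.coe_image, hf.image_eq]
  have hX : X.card = Y.card := by
    rw [← himg, Finset.card_image_of_injOn hf.injOn]
  set k := Y.card with hk
  have e := Y.orderEmbOfFin (rfl : Y.card = k)
  have he : ∀ i : Fin k, Y.orderEmbOfFin rfl i ∈ Y := fun i => Finset.orderEmbOfFin_mem Y rfl i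
  have hF : (fun i : Fin k => f (Y.orderEmbOfFin rfl i)) = X.orderEmbOfFin hX := by
    apply Finset.orderEmbOfFin_unique hX
    · intro i; exact hf.mapsTo (he i)
    · intro i j hij
      exact hfm (he i) (he j) ((Y.orderEmbOfFin rfl).strictMono hij)
  have hG : (fun i : Fin k => g (Y.orderEmbOfFin rfl i)) = X.orderEmbOfFin hX := by
    apply Finset.orderEmbOfFin_unique hX
    · intro i; exact hg.mapsTo (he i)
    · intro i j hij
      exact hgm (he i) (he j) ((Y.orderEmbOfFin rfl).strictMono hij)
  intro y hy
  have : y ∈ Set.range (Y.orderEmbOfFin (rfl : Y.card = k)) := by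
    rw [Finset.range_orderEmbOfFin]
    exact_mod_cast hy
  obtain ⟨i, rfl⟩ := this
  exact congrFun (hF.trans hG.symm) i

section Matching

variable {n : ℕ} {R : Finset (ℤ × ℤ)} {P Q : Finset (Finset (ℤ × ℤ))}

/-- Non-root squares of `R` at level `l`, by first coordinate. -/
noncomputable def Yset (P : Finset (Finset (ℤ × ℤ))) (R : Finset (ℤ × ℤ)) (l : ℤ) :
    Finset ℤ :=
  (R.filter (fun y => level y = l ∧ y ∉ rootSet P)).image Prod.fst

/-- Squares of `R` at level `l - 1` whose tile continues, by first coordinate. -/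
noncomputable def Xset (n : ℕ) (P : Finset (Finset (ℤ × ℤ))) (R : Finset (ℤ × ℤ)) (l : ℤ) :
    Finset ℤ :=
  (R.filter (fun x => level x = l - 1 ∧ ∃ a, a + 1 < n ∧ Age P x a)).image Prod.fst

lemma mem_Yset {l c : ℤ} :
    c ∈ Yset P R l ↔ ((c, l - c) ∈ R ∧ (c, l - c) ∉ rootSet P) := by
  constructor
  · intro hc
    obtain ⟨y, hy, rfl⟩ := Finset.mem_image.1 hc
    rw [Finset.mem_filter] at hy
    have : y = (y.1, l - y.1) := by
      apply square_ext <;> simp [level, hy.2.1]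
      have := hy.2.1; unfold level at this; omega
    rw [← this]
    exact ⟨hy.1, hy.2.2⟩
  · rintro ⟨h1, h2⟩
    exact Finset.mem_image.2 ⟨(c, l - c), Finset.mem_filter.2 ⟨h1, by simp [level], h2⟩, rfl⟩

lemma mem_Xset {l c : ℤ} :
    c ∈ Xset n P R l ↔ ((c, l - 1 - c) ∈ R ∧ ∃ a, a + 1 < n ∧ Age P (c, l - 1 - c) a) := by
  constructor
  · intro hc
    obtain ⟨x, hx, rfl⟩ := Finset.mem_image.1 hc
    rw [Finset.mem_filter] at hx
    have : x = (x.1, l - 1 - x.1) := by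
      apply square_ext
      · simp [level]
        have := hx.2.1; unfold level at this; omega
      · rfl
    rw [← this]
    exact ⟨hx.1, hx.2.2⟩
  · rintro ⟨h1, h2⟩
    exact Finset.mem_image.2 ⟨(c, l - 1 - c), Finset.mem_filter.2 ⟨h1, by simp [level], h2⟩, rfl⟩

/-- The predecessor map at level `l`, on first coordinates. -/
noncomputable def gmap (P : Finset (Finset (ℤ × ℤ))) (l : ℤ) (c : ℤ) : ℤ :=
  (pred P (c, l - c)).1

lemma gmap_spec (hn : 0 < n) (hP : IsTiling n R P) {l c : ℤ} (hc : c ∈ Yset P R l) :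
    Linked P (pred P (c, l - c)) (c, l - c) := by
  rw [mem_Yset] at hc
  exact pred_linked (exists_pred hn hP hc.1 hc.2)

lemma pred_age (hn : 0 < n) (hP : IsTiling n R P) {x y : ℤ × ℤ} (h : Linked P x y)
    (hy : y ∉ rootSet P) : ∃ a, a + 1 < n ∧ Age P x a := by
  obtain ⟨b, hb, hab⟩ := age_exists hn hP (linked_mem hP h).2
  rcases b with _ | a
  · exact absurd ((age_zero hn hP (linked_mem hP h).2).1 hab) hy
  · obtain ⟨x', hx', hax'⟩ := (age_succ hn hP).1 hab
    cases linked_pred_unique hn hP h hx'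
    exact ⟨a, hb, hax'⟩

lemma gmap_bijOn (hn : 0 < n) (hP : IsTiling n R P) (l : ℤ) :
    Set.BijOn (gmap P l) ↑(Yset P R l) ↑(Xset n P R l) := by
  have key : ∀ c ∈ Yset P R l, pred P (c, l - c) = (gmap P l c, l - 1 - gmap P l c) := by
    intro c hc
    have hl := linked_level (gmap_spec hn hP hc)
    have h1 : level (c, l - c) = l := by simp [level]
    have h2 : level (pred P (c, l - c)) = l - 1 := by omega
    apply square_ext
    · rw [h2]; simp [level]
    · rfl
  constructor
  · -- MapsTo
    intro c hc
    have hc' : c ∈ Yset P R l := hc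
    have hlink := gmap_spec hn hP hc'
    rw [Finset.mem_coe, mem_Xset]
    rw [key c hc'] at hlink
    refine ⟨(linked_mem hP hlink).1, ?_⟩
    rw [mem_Yset] at hc'
    exact pred_age hn hP hlink hc'.2
  constructor
  · -- InjOn
    intro c hc c' hc' h
    rw [Finset.mem_coe] at hc hc'
    have h1 := gmap_spec hn hP hc
    have h2 := gmap_spec hn hP hc'
    rw [key c hc] at h1
    rw [key c' hc'] at h2
    rw [h] at h1
    have := linked_succ_unique hn hP h1 h2
    have : c = c' := congrArg Prod.fst this
    exact this
  · -- SurjOn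
    intro d hd
    rw [Finset.mem_coe, mem_Xset] at hd
    obtain ⟨hdR, a, han, ha⟩ := hd
    obtain ⟨y, hy⟩ := age_next hn hP ha han
    have hyR := (linked_mem hP hy).2
    have hylev : level y = l := by
      have := linked_level hy
      unfold level at this ⊢
      simp at this
      omega
    have hynr : y ∉ rootSet P := fun hr => root_no_pred hn hP hr ⟨_, hy⟩
    have hyY : y.1 ∈ Yset P R l := by
      rw [mem_Yset]
      have : y = (y.1, l - y.1) := by
        apply square_ext
        · simp [level]; unfold level at hylev; omega
        · rfl
      rw [← this]
      exact ⟨hyR, hynr⟩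
    refine ⟨y.1, hyY, ?_⟩
    have hyeq : y = (y.1, l - y.1) := by
      apply square_ext
      · simp [level]; unfold level at hylev; omega
      · rfl
    have : pred P (y.1, l - y.1) = (d, l - 1 - d) := by
      rw [← hyeq]; exact pred_eq hn hP hy
    show gmap P l y.1 = d
    unfold gmap
    rw [this]

lemma gmap_mono (hn : 0 < n) (hP : IsTiling n R P) (l : ℤ) :
    StrictMonoOn (gmap P l) ↑(Yset P R l) := by
  intro c hc c' hc' hlt
  rw [Finset.mem_coe] at hc hc'
  have h1 := gmap_spec hn hP hc
  have h2 := gmap_spec hn hP hc'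
  obtain ⟨T, hT, hx1, hy1, hs1⟩ := h1
  obtain ⟨T', hT', hx2, hy2, hs2⟩ := h2
  have f1 := step_fst hs1
  have f2 := step_fst hs2
  simp only at f1 f2
  -- gmap values
  have e1 : gmap P l c = (pred P (c, l - c)).1 := rfl
  have e2 : gmap P l c' = (pred P (c', l - c')).1 := rfl
  rw [e1, e2]
  have hle : (pred P (c, l - c)).1 ≤ (pred P (c', l - c')).1 := by omega
  rcases lt_or_eq_of_le hle with h | h
  · exact h
  · exfalso
    have hlev1 := linked_level (gmap_spec hn hP hc)
    have hlev2 := linked_level (gmap_spec hn hP hc')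
    have : pred P (c, l - c) = pred P (c', l - c') := by
      apply square_ext
      · unfold level at hlev1 hlev2 ⊢
        simp at hlev1 hlev2
        omega
      · exact h
    have := linked_succ_unique hn hP (this ▸ gmap_spec hn hP hc) (gmap_spec hn hP hc')
    have : c = c' := congrArg Prod.fst this
    omega

end Matching


section Main

variable {n : ℕ} {R : Finset (ℤ × ℤ)} {P Q : Finset (Finset (ℤ × ℤ))}

lemma linked_step (hn : 0 < n) (hP : IsTiling n R P) (hQ : IsTiling n R Q)
    (hroot : rootSet P = rootSet Q) (l : ℤ)
    (IH : ∀ x y, level y < l → (Linked P x y ↔ Linked Q x y)) :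
    ∀ x y, level y = l → Linked P x y → Linked Q x y := by
  have AGE : ∀ a : ℕ, ∀ s : ℤ × ℤ, level s < l → (Age P s a ↔ Age Q s a) := by
    intro a
    induction a with
    | zero =>
      intro s hs
      constructor
      · intro h
        have hsR := age_mem hP h
        exact (age_zero hn hQ hsR).2 (hroot ▸ (age_zero hn hP hsR).1 h)
      · intro h
        have hsR := age_mem hQ h
        exact (age_zero hn hP hsR).2 (hroot.symm ▸ (age_zero hn hQ hsR).1 h)
    | succ a ih =>
      intro s hs
      rw [age_succ hn hP, age_succ hn hQ]
      constructor
      · rintro ⟨x, hx, ha⟩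
        have hxl : level x = level s - 1 := by have := linked_level hx; omega
        exact ⟨x, (IH x s hs).1 hx, (ih x (by omega)).1 ha⟩
      · rintro ⟨x, hx, ha⟩
        have hxl : level x = level s - 1 := by have := linked_level hx; omega
        exact ⟨x, (IH x s hs).2 hx, (ih x (by omega)).2 ha⟩
  have hY : Yset Q R l = Yset P R l := by unfold Yset; rw [hroot]
  have hX : Xset n Q R l = Xset n P R l := by
    apply Finset.ext; intro c
    rw [mem_Xset, mem_Xset]
    have e : level (c, l - 1 - c) = l - 1 := by simp [level]
    have hlt : level (c, l - 1 - c) < l := by rw [e]; omega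
    constructor
    · rintro ⟨h1, a, han, ha⟩
      exact ⟨h1, a, han, (AGE a _ hlt).2 ha⟩
    · rintro ⟨h1, a, han, ha⟩
      exact ⟨h1, a, han, (AGE a _ hlt).1 ha⟩
  have heq := mono_bij_unique (gmap_bijOn hn hP l) (hX ▸ hY ▸ gmap_bijOn hn hQ l)
    (gmap_mono hn hP l) (hY ▸ gmap_mono hn hQ l)
  intro x y hyl hxy
  have hyR := (linked_mem hP hxy).2
  have hynrP : y ∉ rootSet P := fun hr => root_no_pred hn hP hr ⟨x, hxy⟩
  have hynrQ : y ∉ rootSet Q := hroot ▸ hynrP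
  have e0 : level (y.1, l - y.1) = l := by simp [level]
  have hyeq : y = (y.1, l - y.1) := square_ext (by rw [hyl, e0]) rfl
  have hyY : y.1 ∈ Yset P R l := mem_Yset.2 (by rw [← hyeq]; exact ⟨hyR, hynrP⟩)
  have hyYQ : y.1 ∈ Yset Q R l := by rw [hY]; exact hyY
  have h1 : pred P (y.1, l - y.1) = x := by rw [← hyeq]; exact pred_eq hn hP hxy
  have hQlink : Linked Q (pred Q (y.1, l - y.1)) (y.1, l - y.1) := gmap_spec hn hQ hyYQ
  have hfst : gmap P l y.1 = gmap Q l y.1 := heq y.1 hyY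
  have lv1 : level x = l - 1 := by have := linked_level hxy; omega
  have lv2 : level (pred Q (y.1, l - y.1)) = l - 1 := by
    have := linked_level hQlink; rw [e0] at this; omega
  have hxeq : x = pred Q (y.1, l - y.1) := by
    apply square_ext
    · rw [lv1, lv2]
    · rw [← h1]; exact hfst
  rw [hyeq, hxeq]
  exact hQlink

lemma linked_iff (hn : 0 < n) (hP : IsTiling n R P) (hQ : IsTiling n R Q)
    (hroot : rootSet P = rootSet Q) : ∀ x y, Linked P x y ↔ Linked Q x y := by
  rcases R.eq_empty_or_nonempty with rfl | hne
  · intro x y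
    constructor
    · intro h; exact absurd (linked_mem hP h).2 (Finset.notMem_empty y)
    · intro h; exact absurd (linked_mem hQ h).2 (Finset.notMem_empty y)
  set L0 : ℤ := ((R.image level).min' (hne.image level)) with hL0
  have hL0le : ∀ y ∈ R, L0 ≤ level y := fun y hy =>
    Finset.min'_le _ _ (Finset.mem_image_of_mem level hy)
  have key : ∀ k : ℕ, ∀ x y : ℤ × ℤ, (level y - L0).toNat < k →
      (Linked P x y ↔ Linked Q x y) := by
    intro k
    induction k with
    | zero => intro x y h; omega
    | succ k ih =>
      intro x y hk
      by_cases hyR : y ∈ R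
      case neg =>
        constructor
        · intro h; exact absurd (linked_mem hP h).2 hyR
        · intro h; exact absurd (linked_mem hQ h).2 hyR
      case pos =>
        have hIH : ∀ x' y', level y' < level y → (Linked P x' y' ↔ Linked Q x' y') := by
          intro x' y' hlt
          by_cases hy'R : y' ∈ R
          · apply ih
            have h1 := hL0le y' hy'R
            have h2 := hL0le y hyR
            omega
          · constructor
            · intro h; exact absurd (linked_mem hP h).2 hy'R
            · intro h; exact absurd (linked_mem hQ h).2 hy'R
        constructor
        · exact linked_step hn hP hQ hroot (level y) hIH x y rfl
        · exact linked_step hn hQ hP hroot.symm (level y)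
            (fun x' y' h => (hIH x' y' h).symm) x y rfl
  intro x y
  exact key ((level y - L0).toNat + 1) x y (by omega)

lemma tiling_subset (hn : 0 < n) (hP : IsTiling n R P) (hQ : IsTiling n R Q)
    (hroot : rootSet P = rootSet Q) : P ⊆ Q := by
  have hlink := linked_iff hn hP hQ hroot
  intro T hT
  obtain ⟨f, hTf, hf, hlev, hfroot⟩ := ribbon_spec hn (hP.1 T hT)
  have hr : f 0 ∈ rootSet Q := hroot ▸ ⟨T, hT, hfroot⟩
  obtain ⟨T', hT', hroot'⟩ := hr
  obtain ⟨g, hTg, hg, hglev, hgroot⟩ := ribbon_spec hn (hQ.1 T' hT')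
  have hg0 : g 0 = f 0 := root_unique hn (hQ.1 T' hT') hgroot hroot'
  have hgi : ∀ i, i < n → g i = f i := by
    intro i
    induction i with
    | zero => intro _; exact hg0
    | succ i ih =>
      intro hi
      have hi' : i < n := by omega
      have hgm : ∀ j, j < n → g j ∈ T' := by
        intro j hj
        rw [hTg]; exact Finset.mem_image.2 ⟨j, Finset.mem_range.2 hj, rfl⟩
      have hfm : ∀ j, j < n → f j ∈ T := by
        intro j hj
        rw [hTf]; exact Finset.mem_image.2 ⟨j, Finset.mem_range.2 hj, rfl⟩
      have hQl : Linked Q (g i) (g (i + 1)) := ⟨T', hT', hgm i hi', hgm (i + 1) hi, hg i hi⟩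
      have hPl : Linked P (g i) (g (i + 1)) := (hlink _ _).2 hQl
      obtain ⟨S, hS, hgiS, hgi1S, hstep⟩ := hPl
      have hST : S = T := tile_unique hP hS hT (ih hi' ▸ hgiS) (hfm i hi')
      rw [hST] at hgi1S
      apply ribbon_level_inj hn (hP.1 T hT) _ hgi1S _ (hfm (i + 1) hi)
      rw [level_step hstep, ih hi', hlev (i + 1) hi, hlev i hi']
      push_cast; ring
  have : T' = T := by
    rw [hTf, hTg]
    apply Finset.image_congr
    intro i hi
    rw [Finset.coe_range, Set.mem_Iio] at hi
    exact hgi i hi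
  rw [← this]
  exact hT'

/-- A ribbon tiling is determined by the set of roots of its tiles. -/
theorem tiling_unique (hn : 0 < n) (hP : IsTiling n R P) (hQ : IsTiling n R Q)
    (hroot : rootSet P = rootSet Q) : P = Q :=
  Finset.Subset.antisymm (tiling_subset hn hP hQ hroot) (tiling_subset hn hQ hP hroot.symm)

end Main


section Counting

variable {n : ℕ} {R : Finset (ℤ × ℤ)} {P : Finset (Finset (ℤ × ℤ))}

noncomputable def rootOf (T : Finset (ℤ × ℤ)) : ℤ × ℤ :=
  if h : ∃ s, IsRoot T s then h.choose else (0, 0)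

lemma rootOf_spec {T : Finset (ℤ × ℤ)} (hn : 0 < n) (hT : IsRibbon n T) :
    IsRoot T (rootOf T) := by
  obtain ⟨f, hTf, hf, hlev, hroot⟩ := ribbon_spec hn hT
  rw [rootOf, dif_pos ⟨f 0, hroot⟩]
  exact (Exists.choose_spec (⟨f 0, hroot⟩ : ∃ s, IsRoot T s))

lemma rootSet_eq_image (hn : 0 < n) (hP : IsTiling n R P) :
    rootSet P = ↑(P.image rootOf) := by
  ext s
  simp only [rootSet, Set.mem_setOf_eq, Finset.coe_image, Set.mem_image, Finset.mem_coe]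
  constructor
  · rintro ⟨T, hT, hr⟩
    exact ⟨T, hT, root_unique hn (hP.1 T hT) (rootOf_spec hn (hP.1 T hT)) hr⟩
  · rintro ⟨T, hT, rfl⟩
    exact ⟨T, hT, rootOf_spec hn (hP.1 T hT)⟩

lemma card_tiles (hn : 0 < n) (hP : IsTiling n R P) : R.card = n * P.card := by
  rw [← hP.2.2, Finset.card_biUnion (fun x hx y hy hxy => hP.2.1 hx hy hxy)]
  simp only [id_eq]
  rw [Finset.sum_congr rfl (fun T hT => ribbon_card hn (hP.1 T hT))]
  rw [Finset.sum_const, smul_eq_mul, mul_comm]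

lemma rootImage_mem (hn : 0 < n) (hP : IsTiling n R P) {A : ℕ} (hA : R.card = A) :
    P.image rootOf ∈ R.powersetCard (A / n) := by
  rw [Finset.mem_powersetCard]
  constructor
  · intro s hs
    obtain ⟨T, hT, rfl⟩ := Finset.mem_image.1 hs
    exact mem_R hP hT (rootOf_spec hn (hP.1 T hT)).1
  · rw [Finset.card_image_of_injOn]
    · have hcard := card_tiles hn hP
      rw [hA] at hcard
      rw [hcard, Nat.mul_div_cancel_left _ hn]
    · intro T hT T' hT' h
      exact tile_unique hP hT hT' (rootOf_spec hn (hP.1 T hT)).1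
        (h ▸ (rootOf_spec hn (hP.1 T' hT')).1)

lemma tilingCount_le (hn : 0 < n) {A : ℕ} (hA : R.card = A) :
    TilingCount n R ≤ A.choose (A / n) := by
  classical
  have hinj : Set.InjOn (fun P => P.image rootOf) {P | IsTiling n R P} := by
    intro P hP P' hP' h
    apply tiling_unique hn hP hP'
    rw [rootSet_eq_image hn hP, rootSet_eq_image hn hP']
    simp only [Finset.coe_inj]
    exact h
  have hsub : (fun P => P.image rootOf) '' {P | IsTiling n R P} ⊆
      ↑(R.powersetCard (A / n)) := by
    rintro _ ⟨P, hP, rfl⟩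
    exact rootImage_mem hn hP hA
  calc TilingCount n R = Set.ncard {P | IsTiling n R P} := rfl
    _ = ((fun P => P.image rootOf) '' {P | IsTiling n R P}).ncard :=
        (Set.ncard_image_of_injOn hinj).symm
    _ ≤ (↑(R.powersetCard (A / n)) : Set _).ncard :=
        Set.ncard_le_ncard hsub (Finset.finite_toSet _)
    _ = (R.powersetCard (A / n)).card := Set.ncard_coe_finset _
    _ = A.choose (A / n) := by rw [Finset.card_powersetCard, hA]

end Counting

end RibbonAux

theorem entropy_le_log_n_add_log_e (n : ℕ) (hn : 2 ≤ n) (R : Finset (ℤ × ℤ)) (A : ℕ)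
    (hA : R.card = A) (hdvd : n ∣ A) (hApos : 0 < A) (hex : ∃ P, IsTiling n R P) :
    Real.logb 2 (TilingCount n R) / ((A : ℝ) / n)
      ≤ Real.logb 2 n + Real.logb 2 (Real.exp 1) := by
  classical
  have hn0 : 0 < n := by omega
  set k := A / n with hk
  have hAk : A = n * k := (Nat.mul_div_cancel' hdvd).symm
  have hkpos : 0 < k := by
    rcases Nat.eq_zero_or_pos k with h | h
    · rw [hAk, h, mul_zero] at hApos; omega
    · exact h
  have hcount : TilingCount n R ≤ A.choose k := RibbonAux.tilingCount_le hn0 hA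
  have hnR : (0:ℝ) < n := by exact_mod_cast hn0
  have hkR : (0:ℝ) < k := by exact_mod_cast hkpos
  have hreal : (A.choose k : ℝ) ≤ (n * Real.exp 1) ^ k := by
    calc (A.choose k : ℝ) ≤ (A:ℝ) ^ k / (Nat.factorial k) := Nat.choose_le_pow_div k A
      _ = (n:ℝ) ^ k * ((k:ℝ) ^ k / (Nat.factorial k)) := by
          rw [hAk]; push_cast; rw [mul_pow]; ring
      _ ≤ (n:ℝ) ^ k * Real.exp k := by
          apply mul_le_mul_of_nonneg_left
            (Real.pow_div_factorial_le_exp (x := (k:ℝ)) (by positivity) k) (by positivity)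
      _ = (n * Real.exp 1) ^ k := by rw [mul_pow, Real.exp_one_pow]
  have hAn : (A:ℝ) / n = k := by
    rw [hAk]; push_cast; rw [mul_comm, mul_div_assoc, div_self (ne_of_gt hnR), mul_one]
  rw [hAn]
  rcases Nat.eq_zero_or_pos (TilingCount n R) with h0 | hpos
  · rw [h0]
    simp only [Nat.cast_zero, Real.logb_zero, zero_div]
    apply add_nonneg
    · exact Real.logb_nonneg one_lt_two (by exact_mod_cast hn0)
    · exact Real.logb_nonneg one_lt_two (Real.one_le_exp (by norm_num))
  · have hT1 : (1:ℝ) ≤ (TilingCount n R : ℝ) := by exact_mod_cast hpos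
    have hle : (TilingCount n R : ℝ) ≤ (n * Real.exp 1) ^ k :=
      le_trans (by exact_mod_cast hcount) hreal
    have hlog : Real.logb 2 (TilingCount n R) ≤ Real.logb 2 ((n * Real.exp 1) ^ k) :=
      Real.logb_le_logb_of_le one_lt_two (by linarith) hle
    rw [Real.logb_pow, Real.logb_mul (ne_of_gt hnR) (ne_of_gt (Real.exp_pos 1))] at hlog
    rw [div_le_iff₀ hkR]
    calc Real.logb 2 (TilingCount n R)
        ≤ (k : ℝ) * (Real.logb 2 n + Real.logb 2 (Real.exp 1)) := hlog
      _ = (Real.logb 2 n + Real.logb 2 (Real.exp 1)) * k := by ring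
end

section
/- The number of n-ribbon tilings of the n×n square is exactly n!. -/
attribute [local instance] Classical.propDecidable

-- ## auxiliary development

/-- Ribbon indices alive at level `l`. -/
def aliveSet (n l : ℕ) : Finset (Fin n) :=
  Finset.univ.filter (fun r => (r : ℕ) ≤ l ∧ l < (r : ℕ) + n)

lemma mem_aliveSet {n l : ℕ} {r : Fin n} :
    r ∈ aliveSet n l ↔ (r : ℕ) ≤ l ∧ l < (r : ℕ) + n := by
  simp [aliveSet]

lemma card_filter_fin (n : ℕ) (p : ℕ → Prop) [DecidablePred p] :
    (Finset.univ.filter (fun r : Fin n => p (r : ℕ))).card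
      = ((Finset.range n).filter p).card := by
  have h : (Finset.range n).filter p
      = (Finset.univ.filter (fun r : Fin n => p (r : ℕ))).image Fin.val := by
    ext b
    simp only [Finset.mem_filter, Finset.mem_range, Finset.mem_image, Finset.mem_univ, true_and]
    constructor
    · rintro ⟨hb, hp⟩; exact ⟨⟨b, hb⟩, hp, rfl⟩
    · rintro ⟨r, hp, rfl⟩; exact ⟨r.isLt, hp⟩
  rw [h, Finset.card_image_of_injective _ Fin.val_injective]

lemma card_aliveSet {n l : ℕ} (hn : 0 < n) (hl : l ≤ 2 * n - 2) :
    (aliveSet n l).card = min l (n - 1) + 1 - (l + 1 - n) := by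
  have : (aliveSet n l).card = ((Finset.range n).filter (fun r => r ≤ l ∧ l < r + n)).card := by
    unfold aliveSet
    exact card_filter_fin n (fun r => r ≤ l ∧ l < r + n)
  rw [this]
  have h2 : (Finset.range n).filter (fun r => r ≤ l ∧ l < r + n)
      = Finset.Icc (l + 1 - n) (min l (n - 1)) := by
    ext x
    simp only [Finset.mem_filter, Finset.mem_range, Finset.mem_Icc]
    omega
  rw [h2, Nat.card_Icc]

/-- x-coordinate of ribbon `r` (root level `r`) at level `l`, for permutation σ. -/
def gfun (n : ℕ) (σ : Equiv.Perm (Fin n)) (r : Fin n) (l : ℕ) : ℕ :=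
  (l + 1 - n) + ((aliveSet n l).filter (fun r' => σ r' < σ r)).card

lemma gfun_lower {n σ r l} : l + 1 - n ≤ gfun n σ r l := Nat.le_add_right _ _

lemma gfun_lt {n : ℕ} {σ : Equiv.Perm (Fin n)} {r r' : Fin n} {l : ℕ}
    (hr : r ∈ aliveSet n l) (h : σ r < σ r') : gfun n σ r l < gfun n σ r' l := by
  unfold gfun
  have hsub : insert r ((aliveSet n l).filter (fun t => σ t < σ r))
      ⊆ (aliveSet n l).filter (fun t => σ t < σ r') := by
    intro t ht
    rcases Finset.mem_insert.mp ht with h1 | h1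
    · subst h1; exact Finset.mem_filter.mpr ⟨hr, h⟩
    · rcases Finset.mem_filter.mp h1 with ⟨h2, h3⟩
      exact Finset.mem_filter.mpr ⟨h2, h3.trans h⟩
  have hnot : r ∉ (aliveSet n l).filter (fun t => σ t < σ r) := by
    simp
  have := Finset.card_le_card hsub
  rw [Finset.card_insert_of_notMem hnot] at this
  omega

lemma gfun_ne {n : ℕ} {σ : Equiv.Perm (Fin n)} {r r' : Fin n} {l : ℕ}
    (hr : r ∈ aliveSet n l) (hr' : r' ∈ aliveSet n l) (h : r ≠ r') :
    gfun n σ r l ≠ gfun n σ r' l := by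
  rcases lt_trichotomy (σ r) (σ r') with h1 | h1 | h1
  · exact Nat.ne_of_lt (gfun_lt hr h1)
  · exact absurd (σ.injective h1) h
  · exact Nat.ne_of_gt (gfun_lt hr' h1)

lemma gfun_upper {n : ℕ} {σ : Equiv.Perm (Fin n)} {r : Fin n} {l : ℕ}
    (hr : r ∈ aliveSet n l) : gfun n σ r l ≤ min l (n - 1) := by
  have hn : 0 < n := r.pos
  rw [mem_aliveSet] at hr
  have hl : l ≤ 2 * n - 2 := by omega
  have hsub : (aliveSet n l).filter (fun t => σ t < σ r) ⊆ (aliveSet n l).erase r := by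
    intro t ht
    rcases Finset.mem_filter.mp ht with ⟨h2, h3⟩
    exact Finset.mem_erase.mpr ⟨fun he => absurd (he ▸ h3) (lt_irrefl _), h2⟩
  have h1 := Finset.card_le_card hsub
  rw [Finset.card_erase_of_mem (mem_aliveSet.mpr hr)] at h1
  have h2 := card_aliveSet hn hl
  unfold gfun
  omega

lemma aliveSet_diag {n : ℕ} (hn : 0 < n) : aliveSet n (n - 1) = Finset.univ := by
  ext r
  simp only [mem_aliveSet, Finset.mem_univ, iff_true]
  have := r.isLt
  omega

lemma gfun_diag {n : ℕ} (hn : 0 < n) (σ : Equiv.Perm (Fin n)) (r : Fin n) :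
    gfun n σ r (n - 1) = (σ r : ℕ) := by
  unfold gfun
  rw [aliveSet_diag hn]
  have h1 : (Finset.univ.filter (fun r' : Fin n => σ r' < σ r)).card
      = (Finset.univ.filter (fun t : Fin n => t < σ r)).card := by
    have him : (Finset.univ.filter (fun t : Fin n => t < σ r))
        = (Finset.univ.filter (fun r' : Fin n => σ r' < σ r)).image σ := by
      ext t
      simp only [Finset.mem_filter, Finset.mem_univ, true_and, Finset.mem_image]
      constructor
      · intro h; exact ⟨σ.symm t, by simp [h]⟩
      · rintro ⟨a, ha, rfl⟩; exact ha
    rw [him, Finset.card_image_of_injective _ σ.injective]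
  rw [h1]
  have : (Finset.univ.filter (fun t : Fin n => t < σ r)) = Finset.Iio (σ r) := by
    ext t; simp
  rw [this, Fin.card_Iio]
  omega

lemma aliveSet_succ_lt {n l : ℕ} (h : l + 1 < n) :
    aliveSet n (l + 1) = insert ⟨l + 1, h⟩ (aliveSet n l) := by
  ext r
  simp only [mem_aliveSet, Finset.mem_insert, Fin.ext_iff]
  have := r.isLt
  constructor
  · intro ⟨h1, h2⟩
    rcases Nat.eq_or_lt_of_le h1 with h3 | h3
    · left; omega
    · right; omega
  · rintro (h1 | ⟨h1, h2⟩) <;> omega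

lemma aliveSet_succ_ge {n l : ℕ} (hn : n ≤ l + 1) (hl : l + 1 ≤ 2 * n - 2) :
    aliveSet n l = insert ⟨l + 1 - n, by omega⟩ (aliveSet n (l + 1)) := by
  ext r
  simp only [mem_aliveSet, Finset.mem_insert, Fin.ext_iff]
  have := r.isLt
  constructor
  · intro ⟨h1, h2⟩
    rcases Nat.eq_or_lt_of_le (show l + 1 - n ≤ (r : ℕ) by omega) with h3 | h3
    · left; omega
    · right; omega
  · rintro (h1 | ⟨h1, h2⟩) <;> omega

lemma gfun_step {n : ℕ} {σ : Equiv.Perm (Fin n)} {r : Fin n} {l : ℕ}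
    (h1 : (r : ℕ) ≤ l) (h2 : l + 1 < (r : ℕ) + n) :
    gfun n σ r (l + 1) = gfun n σ r l ∨ gfun n σ r (l + 1) = gfun n σ r l + 1 := by
  have hrn := r.isLt
  unfold gfun
  by_cases hc : l + 1 < n
  · -- new ribbon l+1 enters
    rw [aliveSet_succ_lt hc, Finset.filter_insert]
    have hnotmem : (⟨l + 1, hc⟩ : Fin n) ∉ (aliveSet n l).filter (fun r' => σ r' < σ r) := by
      simp only [Finset.mem_filter, mem_aliveSet]
      omega
    have hnm2 : (⟨l + 1, hc⟩ : Fin n) ∉ aliveSet n l := by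
      simp only [mem_aliveSet]; omega
    by_cases hσ : σ ⟨l + 1, hc⟩ < σ r
    · rw [if_pos hσ, Finset.card_insert_of_notMem hnotmem]
      right
      omega
    · rw [if_neg hσ]
      left
      omega
  · -- ribbon l+1-n dies
    have hl2 : l + 1 ≤ 2 * n - 2 := by omega
    have hn2 : n ≤ l + 1 := by omega
    rw [aliveSet_succ_ge hn2 hl2, Finset.filter_insert]
    have hnm2 : (⟨l + 1 - n, by omega⟩ : Fin n) ∉ aliveSet n (l + 1) := by
      simp only [mem_aliveSet]; omega
    by_cases hσ : σ ⟨l + 1 - n, by omega⟩ < σ r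
    · rw [if_pos hσ, Finset.card_insert_of_notMem (fun h => hnm2 (Finset.mem_filter.mp h).1)]
      left
      omega
    · rw [if_neg hσ]
      right
      omega

/-- The cell of ribbon `r` at level `l`. -/
def cell (n : ℕ) (σ : Equiv.Perm (Fin n)) (r : Fin n) (l : ℕ) : ℤ × ℤ :=
  ((gfun n σ r l : ℤ), (l : ℤ) - (gfun n σ r l : ℤ))

def tile (n : ℕ) (σ : Equiv.Perm (Fin n)) (r : Fin n) : Finset (ℤ × ℤ) :=
  (Finset.range n).image (fun i => cell n σ r ((r : ℕ) + i))

noncomputable def tilingOf (n : ℕ) (σ : Equiv.Perm (Fin n)) : Finset (Finset (ℤ × ℤ)) :=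
  Finset.univ.image (tile n σ)

lemma level_cell {n σ r l} : level (cell n σ r l) = (l : ℤ) := by
  simp [level, cell]

lemma cell_inj {n : ℕ} {σ σ' : Equiv.Perm (Fin n)} {r r' : Fin n} {l l' : ℕ}
    (h : cell n σ r l = cell n σ' r' l') : gfun n σ r l = gfun n σ' r' l' ∧ l = l' := by
  have h1 := congrArg Prod.fst h
  have h2 := congrArg level h
  rw [level_cell, level_cell] at h2
  simp only [cell] at h1
  constructor
  · exact_mod_cast h1
  · exact_mod_cast h2

lemma tile_isRibbon {n : ℕ} (σ : Equiv.Perm (Fin n)) (r : Fin n) :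
    IsRibbon n (tile n σ r) := by
  refine ⟨fun i => cell n σ r ((r : ℕ) + i), fun i hi => ?_, rfl⟩
  have h1 : (r : ℕ) ≤ (r : ℕ) + i := Nat.le_add_right _ _
  have h2 : (r : ℕ) + i + 1 < (r : ℕ) + n := by omega
  rcases gfun_step (σ := σ) h1 h2 with h | h
  · right
    simp only [cell, Prod.ext_iff, Prod.fst_add, Prod.snd_add]
    constructor
    · rw [show (r:ℕ) + (i+1) = (r:ℕ) + i + 1 by ring, h]; simp
    · rw [show (r:ℕ) + (i+1) = (r:ℕ) + i + 1 by ring, h]; push_cast; ring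
  · left
    simp only [cell, Prod.ext_iff, Prod.fst_add, Prod.snd_add]
    constructor
    · rw [show (r:ℕ) + (i+1) = (r:ℕ) + i + 1 by ring, h]; push_cast; ring
    · rw [show (r:ℕ) + (i+1) = (r:ℕ) + i + 1 by ring, h]; push_cast; ring

lemma cell_mem_square {n : ℕ} {σ : Equiv.Perm (Fin n)} {r : Fin n} {l : ℕ}
    (hr : r ∈ aliveSet n l) :
    cell n σ r l ∈ (Finset.Ico (0 : ℤ) n) ×ˢ (Finset.Ico (0 : ℤ) n) := by
  have hup := gfun_upper (σ := σ) hr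
  have hlo := gfun_lower (n := n) (σ := σ) (r := r) (l := l)
  rw [mem_aliveSet] at hr
  have hrn := r.isLt
  simp only [cell, Finset.mem_product, Finset.mem_Ico]
  push_cast
  constructor
  · constructor
    · positivity
    · have : gfun n σ r l ≤ n - 1 := le_trans hup (min_le_right _ _)
      have hn : 0 < n := by omega
      exact_mod_cast by omega
  · have h1 : gfun n σ r l ≤ l := le_trans hup (min_le_left _ _)
    have h2 : l + 1 - n ≤ gfun n σ r l := hlo
    constructor
    · have : (gfun n σ r l : ℤ) ≤ (l : ℤ) := by exact_mod_cast h1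
      omega
    · have : l < gfun n σ r l + n := by omega
      have : (l : ℤ) < (gfun n σ r l : ℤ) + n := by exact_mod_cast this
      omega

/-- If an injective map on `S` has values in `Icc lo hi` and `S` is as big as the
interval, the image is the whole interval. -/
lemma image_eq_Icc {α : Type*} {S : Finset α} {v : α → ℕ} {lo hi : ℕ}
    (hinj : Set.InjOn v S) (hmem : ∀ a ∈ S, v a ∈ Finset.Icc lo hi)
    (hcard : S.card = hi + 1 - lo) :
    S.image v = Finset.Icc lo hi := by
  apply Finset.eq_of_subset_of_card_le
  · intro t ht
    rcases Finset.mem_image.mp ht with ⟨a, ha, rfl⟩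
    exact hmem a ha
  · rw [Nat.card_Icc, Finset.card_image_of_injOn hinj, hcard]

/-- Rank formula for an injective map whose image is an interval. -/
lemma rank_formula {α : Type*} {S : Finset α} {v : α → ℕ} {lo hi : ℕ}
    (hinj : Set.InjOn v S) (hmem : ∀ a ∈ S, v a ∈ Finset.Icc lo hi)
    (hcard : S.card = hi + 1 - lo) {a : α} (ha : a ∈ S) :
    v a = lo + (S.filter (fun b => v b < v a)).card := by
  have himg := image_eq_Icc hinj hmem hcard
  have h1 : (S.filter (fun b => v b < v a)).image v
      = (Finset.Icc lo hi).filter (fun t => t < v a) := by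
    rw [← himg, Finset.filter_image]
  have h2 : (S.filter (fun b => v b < v a)).card
      = ((Finset.Icc lo hi).filter (fun t => t < v a)).card := by
    rw [← h1, Finset.card_image_of_injOn (hinj.mono (by
      intro x hx; exact Finset.mem_filter.mp hx |>.1))]
  have hva := hmem a ha
  rw [Finset.mem_Icc] at hva
  have h3 : (Finset.Icc lo hi).filter (fun t => t < v a) = Finset.Ico lo (v a) := by
    ext t
    simp only [Finset.mem_filter, Finset.mem_Icc, Finset.mem_Ico]
    omega
  rw [h2, h3, Nat.card_Ico]
  omega

lemma gfun_image {n : ℕ} (hn : 0 < n) (σ : Equiv.Perm (Fin n)) {l : ℕ} (hl : l ≤ 2 * n - 2) :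
    (aliveSet n l).image (fun r => gfun n σ r l)
      = Finset.Icc (l + 1 - n) (min l (n - 1)) := by
  apply image_eq_Icc
  · intro a ha b hb h
    by_contra hne
    exact gfun_ne ha hb hne h
  · intro a ha
    rw [Finset.mem_Icc]
    exact ⟨gfun_lower, gfun_upper ha⟩
  · rw [card_aliveSet hn hl]

lemma tiling_biUnion {n : ℕ} (hn : 0 < n) (σ : Equiv.Perm (Fin n)) :
    (tilingOf n σ).biUnion id = (Finset.Ico (0 : ℤ) n) ×ˢ (Finset.Ico (0 : ℤ) n) := by
  ext p
  simp only [Finset.mem_biUnion, tilingOf, Finset.mem_image, Finset.mem_univ, true_and, id]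
  constructor
  · rintro ⟨T, ⟨r, rfl⟩, hp⟩
    rcases Finset.mem_image.mp hp with ⟨i, hi, rfl⟩
    exact cell_mem_square (mem_aliveSet.mpr ⟨Nat.le_add_right _ _, by
      have := Finset.mem_range.mp hi; omega⟩)
  · intro hp
    rcases Finset.mem_product.mp hp with ⟨hx, hy⟩
    rw [Finset.mem_Ico] at hx hy
    set l : ℕ := (p.1 + p.2).toNat with hldef
    have hl1 : (l : ℤ) = p.1 + p.2 := Int.toNat_of_nonneg (by omega)
    have hln : l ≤ 2 * n - 2 := by omega
    have hx' : p.1.toNat ∈ Finset.Icc (l + 1 - n) (min l (n - 1)) := by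
      rw [Finset.mem_Icc]
      omega
    rw [← gfun_image hn σ hln] at hx'
    rcases Finset.mem_image.mp hx' with ⟨r, hr, hgr⟩
    refine ⟨tile n σ r, ⟨r, rfl⟩, ?_⟩
    rw [mem_aliveSet] at hr
    have : p = cell n σ r ((r : ℕ) + (l - (r : ℕ))) := by
      have h2 : (r : ℕ) + (l - (r : ℕ)) = l := by omega
      rw [h2]
      simp only [cell]
      have : (gfun n σ r l : ℤ) = p.1 := by
        rw [hgr]; omega
      ext
      · simp [this]
      · simp [this]; omega
    rw [this]
    exact Finset.mem_image.mpr ⟨l - (r : ℕ), Finset.mem_range.mpr (by omega), rfl⟩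

lemma mem_tile_iff {n : ℕ} {σ : Equiv.Perm (Fin n)} {r : Fin n} {p : ℤ × ℤ} :
    p ∈ tile n σ r ↔ ∃ i < n, p = cell n σ r ((r : ℕ) + i) := by
  simp only [tile, Finset.mem_image, Finset.mem_range]
  constructor
  · rintro ⟨i, hi, rfl⟩; exact ⟨i, hi, rfl⟩
  · rintro ⟨i, hi, rfl⟩; exact ⟨i, hi, rfl⟩

set_option maxHeartbeats 1000000 in
lemma tile_disjoint {n : ℕ} {σ : Equiv.Perm (Fin n)} {r r' : Fin n} (h : r ≠ r') :
    Disjoint (tile n σ r) (tile n σ r') := by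
  rw [Finset.disjoint_left]
  intro p hp hp'
  rcases mem_tile_iff.mp hp with ⟨i, hi, rfl⟩
  rcases mem_tile_iff.mp hp' with ⟨i', hi', hcell⟩
  rcases cell_inj hcell.symm with ⟨hg, hl⟩
  have halive : r ∈ aliveSet n ((r : ℕ) + i) := mem_aliveSet.mpr ⟨Nat.le_add_right _ _, by omega⟩
  have halive' : r' ∈ aliveSet n ((r : ℕ) + i) := by
    rw [mem_aliveSet]
    omega
  rw [hl] at hg
  exact gfun_ne halive halive' h hg.symm

lemma diag_cell_mem_tile {n : ℕ} (hn : 0 < n) (σ : Equiv.Perm (Fin n)) (r : Fin n) :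
    cell n σ r (n - 1) ∈ tile n σ r := by
  apply mem_tile_iff.mpr
  refine ⟨n - 1 - (r : ℕ), by omega, ?_⟩
  have : (r : ℕ) + (n - 1 - (r : ℕ)) = n - 1 := by
    have := r.isLt; omega
  rw [this]

lemma tile_inj {n : ℕ} (hn : 0 < n) {σ σ' : Equiv.Perm (Fin n)} {r r' : Fin n}
    (h : tile n σ r = tile n σ' r') : r = r' ∧ (σ r : ℕ) = (σ' r' : ℕ) := by
  have h1 : cell n σ r ((r : ℕ) + 0) ∈ tile n σ' r' := by
    rw [← h]; exact mem_tile_iff.mpr ⟨0, hn, rfl⟩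
  have h2 : cell n σ' r' ((r' : ℕ) + 0) ∈ tile n σ r := by
    rw [h]; exact mem_tile_iff.mpr ⟨0, hn, rfl⟩
  rcases mem_tile_iff.mp h1 with ⟨i, hi, hc1⟩
  rcases mem_tile_iff.mp h2 with ⟨i', hi', hc2⟩
  have e1 := (cell_inj hc1).2
  have e2 := (cell_inj hc2).2
  have hrr' : r = r' := by
    apply Fin.ext; omega
  refine ⟨hrr', ?_⟩
  subst hrr'
  have h3 : cell n σ r (n - 1) ∈ tile n σ' r := by
    rw [← h]; exact diag_cell_mem_tile hn σ r
  rcases mem_tile_iff.mp h3 with ⟨j, hj, hc3⟩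
  rcases cell_inj hc3 with ⟨hg, hl⟩
  rw [← hl] at hg
  rw [gfun_diag hn, gfun_diag hn] at hg
  exact hg

lemma tilingOf_injective {n : ℕ} (hn : 0 < n) : Function.Injective (tilingOf n) := by
  intro σ σ' h
  apply Equiv.ext
  intro r
  have h1 : tile n σ r ∈ tilingOf n σ' := by
    rw [← h]
    exact Finset.mem_image.mpr ⟨r, Finset.mem_univ r, rfl⟩
  rcases Finset.mem_image.mp h1 with ⟨r', _, hr'⟩
  rcases tile_inj hn hr'.symm with ⟨hrr, hσ⟩
  subst hrr
  exact Fin.ext (by omega)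

lemma tilingOf_isTiling {n : ℕ} (hn : 0 < n) (σ : Equiv.Perm (Fin n)) :
    IsTiling n ((Finset.Ico (0 : ℤ) n) ×ˢ (Finset.Ico (0 : ℤ) n)) (tilingOf n σ) := by
  refine ⟨?_, ?_, tiling_biUnion hn σ⟩
  · intro T hT
    rcases Finset.mem_image.mp hT with ⟨r, _, rfl⟩
    exact tile_isRibbon σ r
  · intro T hT T' hT' hne
    rcases Finset.mem_image.mp hT with ⟨r, _, rfl⟩
    rcases Finset.mem_image.mp hT' with ⟨r', _, rfl⟩
    have : r ≠ r' := fun h => hne (by rw [h])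
    simpa [Function.onFun] using tile_disjoint (σ := σ) this

-- ## ribbon structure helpers

lemma level_step {p q : ℤ × ℤ} (h : q = p + (1, 0) ∨ q = p + (0, 1)) :
    level q = level p + 1 := by
  rcases h with h | h <;> subst h <;> simp only [level, Prod.fst_add, Prod.snd_add] <;> ring

lemma xcoord_step {p q : ℤ × ℤ} (h : q = p + (1, 0) ∨ q = p + (0, 1)) :
    q.1 = p.1 ∨ q.1 = p.1 + 1 := by
  rcases h with h | h <;> (subst h; simp)

lemma ribbon_level {n : ℕ} {f : ℕ → ℤ × ℤ}
    (hstep : ∀ i, i + 1 < n → f (i + 1) = f i + (1, 0) ∨ f (i + 1) = f i + (0, 1)) :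
    ∀ i, i < n → level (f i) = level (f 0) + i := by
  intro i
  induction i with
  | zero => intro _; simp
  | succ k ih =>
    intro hk
    rw [level_step (hstep k hk), ih (by omega)]
    push_cast
    ring

lemma ribbon_y {p : ℤ × ℤ} : p.2 = level p - p.1 := by simp only [level]; ring

lemma ribbon_mem_iff {n : ℕ} {f : ℕ → ℤ × ℤ} {p : ℤ × ℤ} :
    p ∈ (Finset.range n).image f ↔ ∃ j < n, f j = p := by
  simp [Finset.mem_image]

lemma ribbon_filter_level {n : ℕ} {f : ℕ → ℤ × ℤ}
    (hstep : ∀ i, i + 1 < n → f (i + 1) = f i + (1, 0) ∨ f (i + 1) = f i + (0, 1))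
    {i : ℕ} (hi : i < n) :
    ((Finset.range n).image f).filter (fun p => level p = level (f 0) + i) = {f i} := by
  ext p
  simp only [Finset.mem_filter, Finset.mem_singleton, ribbon_mem_iff]
  constructor
  · rintro ⟨⟨j, hj, rfl⟩, hl⟩
    have := ribbon_level hstep j hj
    have : (j : ℤ) = (i : ℤ) := by omega
    have : j = i := by exact_mod_cast this
    rw [this]
  · rintro rfl
    exact ⟨⟨i, hi, rfl⟩, ribbon_level hstep i hi⟩

lemma ribbon_filter_level_card {n : ℕ} {f : ℕ → ℤ × ℤ}
    (hstep : ∀ i, i + 1 < n → f (i + 1) = f i + (1, 0) ∨ f (i + 1) = f i + (0, 1))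
    (l : ℤ) :
    (((Finset.range n).image f).filter (fun p => level p = l)).card
      = if level (f 0) ≤ l ∧ l < level (f 0) + n then 1 else 0 := by
  by_cases h : level (f 0) ≤ l ∧ l < level (f 0) + n
  · rw [if_pos h]
    obtain ⟨h1, h2⟩ := h
    set i : ℕ := (l - level (f 0)).toNat with hi
    have hil : (i : ℤ) = l - level (f 0) := Int.toNat_of_nonneg (by omega)
    have hin : i < n := by omega
    have : l = level (f 0) + i := by omega
    rw [this, ribbon_filter_level hstep hin, Finset.card_singleton]
  · rw [if_neg h]
    rw [Finset.card_eq_zero, Finset.filter_eq_empty_iff]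
    rintro p hp
    rcases ribbon_mem_iff.mp hp with ⟨j, hj, rfl⟩
    have := ribbon_level hstep j hj
    intro hl
    rw [hl] at this
    push_neg at h
    omega

lemma ribbon_card {n : ℕ} {T : Finset (ℤ × ℤ)} (h : IsRibbon n T) : T.card = n := by
  obtain ⟨f, hstep, rfl⟩ := h
  rw [Finset.card_image_of_injOn, Finset.card_range]
  intro i hi j hj hij
  simp only [Finset.coe_range, Set.mem_Iio] at hi hj
  have h1 := ribbon_level hstep i hi
  have h2 := ribbon_level hstep j hj
  have : (i : ℤ) = (j : ℤ) := by rw [hij] at h1; omega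
  exact_mod_cast this

lemma square_level_card {n : ℕ} {k : ℕ} (hk : k < n) :
    ((((Finset.Ico (0:ℤ) n) ×ˢ (Finset.Ico (0:ℤ) n)).filter
        (fun p => level p = (k : ℤ)))).card = k + 1 := by
  have h : (((Finset.Ico (0:ℤ) n) ×ˢ (Finset.Ico (0:ℤ) n)).filter
      (fun p => level p = (k : ℤ))).card = (Finset.Icc (0:ℤ) k).card := by
    apply Finset.card_nbij' (fun p => p.1) (fun x => (x, (k : ℤ) - x))
    · intro p hp
      rw [Finset.mem_coe, Finset.mem_filter] at hp
      simp only [Finset.mem_coe, Finset.mem_filter, Finset.mem_product, Finset.mem_Ico, level] at hp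
      simp only [Finset.mem_coe, Finset.mem_Icc]
      omega
    · intro x hx
      simp only [Finset.mem_coe, Finset.mem_Icc] at hx
      rw [Finset.mem_coe, Finset.mem_filter]
      simp only [Finset.mem_coe, Finset.mem_filter, Finset.mem_product, Finset.mem_Ico, level]
      omega
    · intro p hp
      rw [Finset.mem_coe, Finset.mem_filter] at hp
      simp only [Finset.mem_coe, Finset.mem_filter, Finset.mem_product, Finset.mem_Ico, level] at hp
      ext
      · rfl
      · simp; omega
    · intro x hx
      rfl
  rw [h, Int.card_Icc]
  simp

lemma tiling_surjective {n : ℕ} (hn : 0 < n) {P : Finset (Finset (ℤ × ℤ))}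
    (hP : IsTiling n ((Finset.Ico (0:ℤ) n) ×ˢ (Finset.Ico (0:ℤ) n)) P) :
    ∃ σ : Equiv.Perm (Fin n), P = tilingOf n σ := by
  obtain ⟨hrib, hdisj, hcover⟩ := hP
  have hrib' : ∀ T ∈ P, ∃ f : ℕ → ℤ × ℤ,
      (∀ i, i + 1 < n → f (i + 1) = f i + (1, 0) ∨ f (i + 1) = f i + (0, 1)) ∧
      T = (Finset.range n).image f := hrib
  choose! f hstep himg using hrib'
  -- tiles are in the square
  have hTsub : ∀ T ∈ P, T ⊆ (Finset.Ico (0:ℤ) n) ×ˢ (Finset.Ico (0:ℤ) n) := by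
    intro T hT
    rw [← hcover]
    exact Finset.subset_biUnion_of_mem id hT
  have hmemT : ∀ T ∈ P, ∀ i < n, f T i ∈ T := by
    intro T hT i hi
    have h1 : f T i ∈ (Finset.range n).image (f T) :=
      Finset.mem_image.mpr ⟨i, Finset.mem_range.mpr hi, rfl⟩
    rwa [← himg T hT] at h1
  have hmemR : ∀ T ∈ P, ∀ i < n, (0 ≤ (f T i).1 ∧ (f T i).1 < n)
      ∧ (0 ≤ (f T i).2 ∧ (f T i).2 < n) := by
    intro T hT i hi
    have := hTsub T hT (hmemT T hT i hi)
    simpa only [Finset.mem_product, Finset.mem_Ico] using this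
  set ρ : Finset (ℤ × ℤ) → ℤ := fun T => level (f T 0) with hρdef
  have hρlev : ∀ T ∈ P, ∀ i < n, level (f T i) = ρ T + i := by
    intro T hT i hi
    exact ribbon_level (hstep T hT) i hi
  have hρrange : ∀ T ∈ P, 0 ≤ ρ T ∧ ρ T ≤ n - 1 := by
    intro T hT
    have h0 := hmemR T hT 0 hn
    have h1 := hmemR T hT (n-1) (by omega)
    have h2 := hρlev T hT (n-1) (by omega)
    have h3 : ((n : ℤ) - 1) = ((n - 1 : ℕ) : ℤ) := by push_cast; omega
    simp only [hρdef, level] at h2 ⊢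
    omega
  -- P has exactly n tiles
  have hPcard : P.card = n := by
    have h1 : (P.biUnion id).card = ∑ T ∈ P, T.card := by
      apply Finset.card_biUnion
      intro x hx y hy hxy
      exact hdisj hx hy hxy
    have h2 : ∑ T ∈ P, T.card = P.card * n := by
      rw [Finset.sum_congr rfl (fun T hT => ribbon_card ⟨f T, hstep T hT, himg T hT⟩)]
      rw [Finset.sum_const, smul_eq_mul]
    have h3 : ((Finset.Ico (0:ℤ) n) ×ˢ (Finset.Ico (0:ℤ) n)).card = n * n := by
      rw [Finset.card_product, Int.card_Ico]
      simp
    have h4 : P.card * n = n * n := by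
      rw [← h2, ← h1, hcover, h3]
    exact Nat.eq_of_mul_eq_mul_right hn h4
  -- level counting
  have hcount : ∀ k : ℕ, k < n → (P.filter (fun T => ρ T ≤ (k:ℤ))).card = k + 1 := by
    intro k hk
    have hRl : (((Finset.Ico (0:ℤ) n) ×ˢ (Finset.Ico (0:ℤ) n)).filter
        (fun p => level p = (k:ℤ))) = P.biUnion (fun T => T.filter (fun p => level p = (k:ℤ))) := by
      rw [← hcover, Finset.filter_biUnion]
      rfl
    have h1 : (P.biUnion (fun T => T.filter (fun p => level p = (k:ℤ)))).card
        = ∑ T ∈ P, (T.filter (fun p => level p = (k:ℤ))).card := by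
      apply Finset.card_biUnion
      intro x hx y hy hxy
      exact Finset.disjoint_filter_filter (hdisj hx hy hxy)
    have h2 : ∀ T ∈ P, (T.filter (fun p => level p = (k:ℤ))).card
        = if ρ T ≤ (k:ℤ) then 1 else 0 := by
      intro T hT
      have hcard := ribbon_filter_level_card (hstep T hT) (k:ℤ)
      rw [← himg T hT] at hcard
      rw [hcard]
      have hr := hρrange T hT
      apply if_congr _ rfl rfl
      simp only [hρdef] at hr ⊢
      omega
    have h3 : ∑ T ∈ P, (T.filter (fun p => level p = (k:ℤ))).card
        = (P.filter (fun T => ρ T ≤ (k:ℤ))).card := by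
      rw [Finset.sum_congr rfl h2, Finset.card_filter]
    rw [← h3, ← h1, ← hRl, square_level_card hk]
  -- unique tile with each root level
  have hexu : ∀ k : ℕ, k < n → (P.filter (fun T => ρ T = (k:ℤ))).card = 1 := by
    intro k hk
    rcases Nat.eq_zero_or_pos k with hk0 | hk0
    · subst hk0
      have h1 := hcount 0 hk
      have heq : P.filter (fun T => ρ T = ((0:ℕ):ℤ)) = P.filter (fun T => ρ T ≤ ((0:ℕ):ℤ)) := by
        apply Finset.filter_congr
        intro T hT
        have := hρrange T hT
        constructor
        · intro h; omega
        · intro h; omega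
      rw [heq]
      omega
    · have h1 := hcount k hk
      have h2 := hcount (k-1) (by omega)
      have hc : ((k-1:ℕ):ℤ) = (k:ℤ) - 1 := by push_cast [hk0]; ring
      have hsplit : P.filter (fun T => ρ T ≤ (k:ℤ))
          = P.filter (fun T => ρ T ≤ ((k-1:ℕ):ℤ)) ∪ P.filter (fun T => ρ T = (k:ℤ)) := by
        ext T
        simp only [Finset.mem_union, Finset.mem_filter]
        rw [hc]
        constructor
        · rintro ⟨hT, hle⟩
          by_cases h : ρ T = (k:ℤ)
          · exact Or.inr ⟨hT, h⟩
          · exact Or.inl ⟨hT, by omega⟩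
        · rintro (⟨hT, h⟩ | ⟨hT, h⟩) <;> exact ⟨hT, by omega⟩
      have hdisj2 : Disjoint (P.filter (fun T => ρ T ≤ ((k-1:ℕ):ℤ)))
          (P.filter (fun T => ρ T = (k:ℤ))) := by
        rw [Finset.disjoint_left]
        intro T hT1 hT2
        rw [Finset.mem_filter] at hT1 hT2
        rw [hc] at hT1
        omega
      have h3 := Finset.card_union_of_disjoint hdisj2
      rw [← hsplit] at h3
      omega
  -- choose the tile with root level r
  have hex1 : ∀ r : Fin n, ∃ T, P.filter (fun T => ρ T = ((r:ℕ):ℤ)) = {T} := by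
    intro r
    exact Finset.card_eq_one.mp (hexu r r.isLt)
  choose χ hχ using hex1
  have hχmem : ∀ r : Fin n, χ r ∈ P ∧ ρ (χ r) = ((r:ℕ):ℤ) := by
    intro r
    have h1 : χ r ∈ P.filter (fun T => ρ T = ((r:ℕ):ℤ)) := by
      rw [hχ r]
      exact Finset.mem_singleton_self _
    exact Finset.mem_filter.mp h1
  have hχuniq : ∀ T ∈ P, ∀ r : Fin n, ρ T = ((r:ℕ):ℤ) → T = χ r := by
    intro T hT r hr
    have h1 : T ∈ P.filter (fun T => ρ T = ((r:ℕ):ℤ)) := Finset.mem_filter.mpr ⟨hT, hr⟩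
    rw [hχ r] at h1
    exact Finset.mem_singleton.mp h1
  have hχsurj : ∀ T ∈ P, ∃ r : Fin n, T = χ r := by
    intro T hT
    have hr := hρrange T hT
    refine ⟨⟨(ρ T).toNat, by omega⟩, hχuniq T hT _ ?_⟩
    simp only []
    omega
  -- the x-coordinate function of tile r at level l
  set γ : Fin n → ℕ → ℤ := fun r l => (f (χ r) (l - (r:ℕ))).1 with hγdef
  have hcellmem : ∀ r : Fin n, ∀ l : ℕ, (r:ℕ) ≤ l → l < (r:ℕ) + n →
      f (χ r) (l - (r:ℕ)) ∈ χ r :=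
    fun r l h1 h2 => hmemT _ (hχmem r).1 _ (by omega)
  have hlevγ : ∀ r : Fin n, ∀ l : ℕ, (r:ℕ) ≤ l → l < (r:ℕ) + n →
      level (f (χ r) (l - (r:ℕ))) = (l:ℤ) := by
    intro r l h1 h2
    have h3 := hρlev (χ r) (hχmem r).1 (l - (r:ℕ)) (by omega)
    rw [(hχmem r).2] at h3
    rw [h3]
    push_cast
    omega
  have hboundγ : ∀ r : Fin n, ∀ l : ℕ, (r:ℕ) ≤ l → l < (r:ℕ) + n →
      0 ≤ γ r l ∧ γ r l < n ∧ 0 ≤ (l:ℤ) - γ r l ∧ (l:ℤ) - γ r l < n := by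
    intro r l h1 h2
    have h3 := hmemR (χ r) (hχmem r).1 (l - (r:ℕ)) (by omega)
    have h4 := hlevγ r l h1 h2
    have h5 : (f (χ r) (l - (r:ℕ))).2 = level (f (χ r) (l - (r:ℕ))) - (f (χ r) (l - (r:ℕ))).1 :=
      ribbon_y
    rw [h4] at h5
    simp only [hγdef]
    omega
  have hdistγ : ∀ l : ℕ, ∀ r r' : Fin n, r ≠ r' → (r:ℕ) ≤ l → l < (r:ℕ) + n →
      (r':ℕ) ≤ l → l < (r':ℕ) + n → γ r l ≠ γ r' l := by
    intro l r r' hne h1 h2 h3 h4 heq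
    have hp := hcellmem r l h1 h2
    have hq := hcellmem r' l h3 h4
    have hlp := hlevγ r l h1 h2
    have hlq := hlevγ r' l h3 h4
    have hpq : f (χ r) (l - (r:ℕ)) = f (χ r') (l - (r':ℕ)) := by
      have hy : (f (χ r) (l - (r:ℕ))).2 = (f (χ r') (l - (r':ℕ))).2 := by
        rw [ribbon_y, ribbon_y, hlp, hlq]
        simp only [hγdef] at heq
        omega
      simp only [hγdef] at heq
      exact Prod.ext heq hy
    have hχne : χ r ≠ χ r' := by
      intro hc
      have e1 := (hχmem r).2
      have e2 := (hχmem r').2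
      rw [hc] at e1
      rw [e1] at e2
      have : (r:ℕ) = (r':ℕ) := by exact_mod_cast e2
      exact hne (Fin.ext this)
    have hd := hdisj (hχmem r).1 (hχmem r').1 hχne
    have := Finset.disjoint_left.mp hd hp
    rw [hpq] at this
    exact this hq
  have hstepγ : ∀ r : Fin n, ∀ l : ℕ, (r:ℕ) ≤ l → l + 1 < (r:ℕ) + n →
      γ r (l+1) = γ r l ∨ γ r (l+1) = γ r l + 1 := by
    intro r l h1 h2
    have h3 := xcoord_step (hstep (χ r) (hχmem r).1 (l - (r:ℕ)) (by omega))
    have h4 : l + 1 - (r:ℕ) = (l - (r:ℕ)) + 1 := by omega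
    simp only [hγdef]
    rw [h4]
    exact h3
  have hconsec : ∀ l : ℕ, ∀ r r' : Fin n, (r:ℕ) ≤ l → (r':ℕ) ≤ l →
      l + 1 < (r:ℕ) + n → l + 1 < (r':ℕ) + n →
      (γ r l < γ r' l ↔ γ r (l+1) < γ r' (l+1)) := by
    intro l r r' h1 h2 h3 h4
    by_cases hrr : r = r'
    · subst hrr; simp
    · have d1 := hdistγ l r r' hrr h1 (by omega) h2 (by omega)
      have d2 := hdistγ (l+1) r r' hrr (by omega) h3 (by omega) h4
      have s1 := hstepγ r l h1 h3
      have s2 := hstepγ r' l h2 h4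
      constructor
      · intro h
        rcases s1 with e1 | e1 <;> rcases s2 with e2 | e2 <;> omega
      · intro h
        rcases s1 with e1 | e1 <;> rcases s2 with e2 | e2 <;> omega
  have hdiag1 : ∀ d : ℕ, d ≤ n - 1 → ∀ r r' : Fin n, (r:ℕ) ≤ n-1-d → (r':ℕ) ≤ n-1-d →
      (γ r (n-1-d) < γ r' (n-1-d) ↔ γ r (n-1) < γ r' (n-1)) := by
    intro d
    induction d with
    | zero => intro _ r r' _ _; rfl
    | succ d ih =>
      intro hd r r' hr hr'
      have he : n-1-(d+1)+1 = n-1-d := by omega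
      have h1 := hconsec (n-1-(d+1)) r r' hr hr'
        (by have := r.isLt; omega) (by have := r'.isLt; omega)
      rw [he] at h1
      rw [h1]
      exact ih (by omega) r r' (by omega) (by omega)
  have hdiag2 : ∀ d : ℕ, ∀ r r' : Fin n, n-1+d < (r:ℕ) + n → n-1+d < (r':ℕ) + n →
      (γ r (n-1+d) < γ r' (n-1+d) ↔ γ r (n-1) < γ r' (n-1)) := by
    intro d
    induction d with
    | zero => intro r r' _ _; rfl
    | succ d ih =>
      intro r r' hr hr'
      have he : n-1+(d+1) = (n-1+d)+1 := by omega
      have h1 := hconsec (n-1+d) r r'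
        (by have := r.isLt; omega) (by have := r'.isLt; omega)
        (by omega) (by omega)
      rw [he, ← h1]
      exact ih r r' (by omega) (by omega)
  have hdiagAll : ∀ l : ℕ, ∀ r r' : Fin n, (r:ℕ) ≤ l → l < (r:ℕ) + n →
      (r':ℕ) ≤ l → l < (r':ℕ) + n →
      (γ r l < γ r' l ↔ γ r (n-1) < γ r' (n-1)) := by
    intro l r r' h1 h2 h3 h4
    rcases le_or_gt l (n-1) with hl | hl
    · have h5 := hdiag1 (n-1-l) (by omega) r r' (by omega) (by omega)
      rwa [show n-1-(n-1-l) = l by omega] at h5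
    · have h5 := hdiag2 (l-(n-1)) r r' (by omega) (by omega)
      rwa [show n-1+(l-(n-1)) = l by omega] at h5
  -- the permutation
  have hb : ∀ r : Fin n, 0 ≤ γ r (n-1) ∧ γ r (n-1) < n := by
    intro r
    have := hboundγ r (n-1) (by have := r.isLt; omega) (by have := r.isLt; omega)
    exact ⟨this.1, this.2.1⟩
  set sfn : Fin n → Fin n := fun r => ⟨(γ r (n-1)).toNat, by have := hb r; omega⟩ with hsdef
  have hsinj : Function.Injective sfn := by
    intro a b hab
    by_contra hne
    have h1 := hdistγ (n-1) a b hne (by have := a.isLt; omega) (by have := a.isLt; omega)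
      (by have := b.isLt; omega) (by have := b.isLt; omega)
    apply h1
    have h2 : (γ a (n-1)).toNat = (γ b (n-1)).toNat := by
      simpa [hsdef, Fin.ext_iff] using hab
    have ha := hb a
    have hbb := hb b
    omega
  let σ : Equiv.Perm (Fin n) := Equiv.ofBijective sfn (Finite.injective_iff_bijective.mp hsinj)
  have hσval : ∀ r, σ r = sfn r := fun r => rfl
  -- γ coincides with gfun
  have hγg : ∀ r : Fin n, ∀ l : ℕ, (r:ℕ) ≤ l → l < (r:ℕ) + n → γ r l = (gfun n σ r l : ℤ) := by
    intro r l hr1 hr2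
    have hrn := r.isLt
    have hl2 : l ≤ 2*n - 2 := by omega
    have hmemS : ∀ t : Fin n, t ∈ aliveSet n l → (t:ℕ) ≤ l ∧ l < (t:ℕ) + n :=
      fun t ht => mem_aliveSet.mp ht
    have hrS : r ∈ aliveSet n l := mem_aliveSet.mpr ⟨hr1, hr2⟩
    -- rank formula for γ
    have hv1mem : ∀ t ∈ aliveSet n l, (γ t l).toNat ∈ Finset.Icc (l+1-n) (min l (n-1)) := by
      intro t ht
      obtain ⟨h1, h2⟩ := hmemS t ht
      have h3 := hboundγ t l h1 h2
      rw [Finset.mem_Icc]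
      omega
    have hv1inj : Set.InjOn (fun t => (γ t l).toNat) (aliveSet n l) := by
      intro a ha b hb' hab
      by_contra hne
      obtain ⟨a1, a2⟩ := hmemS a (by exact_mod_cast ha)
      obtain ⟨b1, b2⟩ := hmemS b (by exact_mod_cast hb')
      have ga := hboundγ a l a1 a2
      have gb := hboundγ b l b1 b2
      exact hdistγ l a b hne a1 a2 b1 b2 (by simp only at hab; omega)
    have rank1 := rank_formula hv1inj hv1mem (card_aliveSet hn hl2) hrS
    -- rank formula for gfun
    have hv2mem : ∀ t ∈ aliveSet n l, gfun n σ t l ∈ Finset.Icc (l+1-n) (min l (n-1)) := by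
      intro t ht
      rw [Finset.mem_Icc]
      exact ⟨gfun_lower, gfun_upper ht⟩
    have hv2inj : Set.InjOn (fun t => gfun n σ t l) (aliveSet n l) := by
      intro a ha b hb' hab
      by_contra hne
      exact gfun_ne (by exact_mod_cast ha) (by exact_mod_cast hb') hne hab
    have rank2 := rank_formula hv2inj hv2mem (card_aliveSet hn hl2) hrS
    -- the two filters agree
    have hfeq : (aliveSet n l).filter (fun t => (γ t l).toNat < (γ r l).toNat)
        = (aliveSet n l).filter (fun t => gfun n σ t l < gfun n σ r l) := by
      apply Finset.filter_congr
      intro t ht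
      obtain ⟨t1, t2⟩ := hmemS t ht
      have gt' := hboundγ t l t1 t2
      have gr' := hboundγ r l hr1 hr2
      have hiff1 : (γ t l).toNat < (γ r l).toNat ↔ γ t l < γ r l := by omega
      have hiff2 : γ t l < γ r l ↔ γ t (n-1) < γ r (n-1) := hdiagAll l t r t1 t2 hr1 hr2
      have hiff3 : γ t (n-1) < γ r (n-1) ↔ σ t < σ r := by
        rw [hσval, hσval]
        simp only [hsdef, Fin.lt_def]
        have := hb t
        have := hb r
        omega
      have hiff4 : σ t < σ r ↔ gfun n σ t l < gfun n σ r l := by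
        constructor
        · exact gfun_lt ht
        · intro h
          rcases lt_trichotomy (σ t) (σ r) with hc | hc | hc
          · exact hc
          · exact absurd (congrArg (gfun n σ · l) (σ.injective hc)) (by show ¬ gfun n σ t l = gfun n σ r l; omega)
          · exact absurd (gfun_lt hrS hc) (by omega)
      constructor
      · intro h; exact hiff4.mp (hiff3.mp (hiff2.mp (hiff1.mp h)))
      · intro h; exact hiff1.mpr (hiff2.mpr (hiff3.mpr (hiff4.mpr h)))
    rw [hfeq] at rank1
    have gr' := hboundγ r l hr1 hr2
    omega
  -- conclude
  refine ⟨σ, ?_⟩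
  have htile : ∀ r : Fin n, χ r = tile n σ r := by
    intro r
    have hrn := r.isLt
    rw [himg (χ r) (hχmem r).1]
    unfold tile
    apply Finset.image_congr
    intro i hi
    rw [Finset.coe_range, Set.mem_Iio] at hi
    have h1 : (r:ℕ) ≤ (r:ℕ) + i := Nat.le_add_right _ _
    have h2 : (r:ℕ) + i < (r:ℕ) + n := by omega
    have hx : γ r ((r:ℕ) + i) = (f (χ r) i).1 := by
      simp only [hγdef]
      rw [show (r:ℕ) + i - (r:ℕ) = i by omega]
    have hgg := hγg r ((r:ℕ) + i) h1 h2
    have hlev := hlevγ r ((r:ℕ) + i) h1 h2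
    rw [show (r:ℕ) + i - (r:ℕ) = i by omega] at hlev
    apply Prod.ext
    · simp only [cell]
      rw [← hgg, hx]
    · simp only [cell]
      rw [← hgg, hx]
      rw [ribbon_y (p := f (χ r) i), hlev]
  apply Finset.Subset.antisymm
  · intro T hT
    rcases hχsurj T hT with ⟨r, rfl⟩
    rw [htile r]
    exact Finset.mem_image.mpr ⟨r, Finset.mem_univ r, rfl⟩
  · intro T hT
    rcases Finset.mem_image.mp hT with ⟨r, _, rfl⟩
    rw [← htile r]
    exact (hχmem r).1

theorem tilingCount_square_eq_factorial (n : ℕ) (hn : 0 < n) :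
    TilingCount n ((Finset.Ico (0 : ℤ) n) ×ˢ (Finset.Ico (0 : ℤ) n)) = Nat.factorial n := by
  have hset : {P | IsTiling n ((Finset.Ico (0 : ℤ) n) ×ˢ (Finset.Ico (0 : ℤ) n)) P}
      = Set.range (tilingOf n) := by
    ext P
    constructor
    · intro hP
      rcases tiling_surjective hn hP with ⟨σ, rfl⟩
      exact ⟨σ, rfl⟩
    · rintro ⟨σ, rfl⟩
      exact tilingOf_isTiling hn σ
  rw [TilingCount, hset]
  rw [← Nat.card_coe_set_eq]
  rw [Nat.card_range_of_injective (tilingOf_injective hn)]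
  rw [Nat.card_eq_fintype_card, Fintype.card_perm, Fintype.card_fin]
end
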